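/- arXiv:2104.05762 — 6 statements merged into one kernel-verified Lean document; each statement's English description precedes it below -/
import Mathlib

section
/- If Cov(Y(t), T | X) = 0 almost surely (unconfoundedness), then for any measurable reduction d, Cov(Y(t), T | d(X)) = Cov(m_t(X), e(X) | d(X)) almost surely, where m_t(X) = E[Y(t)|X] and e(X) = E[T|X]. -/
open MeasureTheory ProbabilityTheory

/-- Conditional covariance given a sub-σ-algebra `m`:
`Cov(A, B | m) = E[A·B | m] - E[A | m] · E[B | m]`. -/
noncomputable def condCov {Ω : Type*} [mΩ : MeasurableSpace Ω] (μ : Measure Ω)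
    (m : MeasurableSpace Ω) (A B : Ω → ℝ) : Ω → ℝ :=
  fun ω => condExp m μ (fun ω' => A ω' * B ω') ω - condExp m μ A ω * condExp m μ B ω

/-
Conditioning on `d(X)` is coarser than conditioning on `X`, so by the tower property
each of the three conditional expectations in `Cov(Y(t), T | d(X))` may first be taken given `X`.
This turns `E[Y(t)|d(X)]` and `E[T|d(X)]` into `E[m_t(X)|d(X)]` and `E[e(X)|d(X)]`, and
unconfoundedness turns `E[Y(t)·T | X]` into `m_t(X)·e(X)`, which gives `Cov(m_t(X), e(X) | d(X))`.
-/

section ConditionalCovariance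

variable {Ω : Type*} {m₁ m₂ m₀ : MeasurableSpace Ω} {μ : Measure Ω} {A B : Ω → ℝ}

theorem condExp_mul_ae_eq_of_condCov_ae_eq_zero (h : condCov μ m₂ A B =ᵐ[μ] 0) :
    μ[fun ω => A ω * B ω | m₂] =ᵐ[μ] fun ω => μ[A | m₂] ω * μ[B | m₂] ω := by
  filter_upwards [h] with ω hω
  exact sub_eq_zero.mp hω

theorem condCov_ae_eq_condCov_condExp_of_condCov_ae_eq_zero (hm₁₂ : m₁ ≤ m₂) (hm₂ : m₂ ≤ m₀)
    [SigmaFinite (μ.trim hm₂)] (h : condCov μ m₂ A B =ᵐ[μ] 0) :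
    condCov μ m₁ A B =ᵐ[μ] condCov μ m₁ (μ[A | m₂]) (μ[B | m₂]) := by
  have hAB : μ[fun ω => A ω * B ω | m₁]
      =ᵐ[μ] μ[fun ω => μ[A | m₂] ω * μ[B | m₂] ω | m₁] :=
    (condExp_condExp_of_le hm₁₂ hm₂).symm.trans
      (condExp_congr_ae (condExp_mul_ae_eq_of_condCov_ae_eq_zero h))
  have hA : μ[A | m₁] =ᵐ[μ] μ[μ[A | m₂] | m₁] := (condExp_condExp_of_le hm₁₂ hm₂).symm
  have hB : μ[B | m₁] =ᵐ[μ] μ[μ[B | m₂] | m₁] := (condExp_condExp_of_le hm₁₂ hm₂).symm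
  filter_upwards [hAB, hA, hB] with ω hωAB hωA hωB
  simp only [condCov, hωAB, hωA, hωB]

end ConditionalCovariance

theorem reduction_bias_identification_general
    {Ω α β : Type*} [MeasurableSpace Ω] [MeasurableSpace α] [MeasurableSpace β]
    (μ : Measure Ω) [IsProbabilityMeasure μ]
    (X : Ω → α) (d : α → β) (Yt T : Ω → ℝ)
    (hX : Measurable X) (hd : Measurable d)
    (h_unconf : condCov μ (MeasurableSpace.comap X inferInstance) Yt T =ᵐ[μ] fun _ => 0) :
    condCov μ (MeasurableSpace.comap (d ∘ X) inferInstance) Yt T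
      =ᵐ[μ]
    condCov μ (MeasurableSpace.comap (d ∘ X) inferInstance)
      (condExp (MeasurableSpace.comap X inferInstance) μ Yt)
      (condExp (MeasurableSpace.comap X inferInstance) μ T) :=
  condCov_ae_eq_condCov_condExp_of_condCov_ae_eq_zero
    (MeasurableSpace.comap_le_comap_of_eq_comp d hd rfl) hX.comap_le h_unconf

/-- If `Cov(Y(t), T | X) = 0` a.s. (unconfoundedness), then for any measurable reduction `d`,
`Cov(Y(t), T | d(X)) = Cov(m_t(X), e(X) | d(X))` a.s., where `m_t(X) = E[Y(t)|X]` and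
`e(X) = E[T|X]`. -/
theorem reduction_bias_identification
    {Ω α β : Type*} [MeasurableSpace Ω] [MeasurableSpace α] [MeasurableSpace β]
    (μ : Measure Ω) [IsProbabilityMeasure μ]
    (X : Ω → α) (d : α → β) (Yt T : Ω → ℝ)
    (hX : Measurable X) (hd : Measurable d)
    (hYt : MemLp Yt 2 μ) (hT : MemLp T 2 μ)
    (h_unconf : condCov μ (MeasurableSpace.comap X inferInstance) Yt T =ᵐ[μ] fun _ => 0) :
    condCov μ (MeasurableSpace.comap (d ∘ X) inferInstance) Yt T
      =ᵐ[μ]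
    condCov μ (MeasurableSpace.comap (d ∘ X) inferInstance)
      (condExp (MeasurableSpace.comap X inferInstance) μ Yt)
      (condExp (MeasurableSpace.comap X inferInstance) μ T) :=
  reduction_bias_identification_general μ X d Yt T hX hd h_unconf
end

section
/- Let T be a {0,1}-valued random variable, Y(1) integrable, d measurable, and e_d(X) := E[T | d(X)] with 0 < e_d(X) < 1 almost surely. Then E[T·Y(1)/e_d(X)] = E[Y(1)] + E[Cov(T, Y(1) | d(X)) / e_d(X)]. -/
open MeasureTheory ProbabilityTheory

section

variable {Ω : Type*} {m mΩ : MeasurableSpace Ω} {μ : Measure Ω}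

theorem MeasureTheory.Integrable.of_div_of_ae_bound {f e : Ω → ℝ} {C : ℝ}
    (hfe : Integrable (fun ω => f ω / e ω) μ) (he : AEStronglyMeasurable e μ)
    (he_bound : ∀ᵐ ω ∂μ, ‖e ω‖ ≤ C) (he_ne : ∀ᵐ ω ∂μ, e ω ≠ 0) :
    Integrable f μ :=
  (hfe.bdd_mul he he_bound).congr <| by
    filter_upwards [he_ne] with ω hω
    exact mul_div_cancel₀ (f ω) hω

theorem condExp_div_of_stronglyMeasurable_right {f e : Ω → ℝ} (he : StronglyMeasurable[m] e)
    (hf : Integrable f μ) (hfe : Integrable (fun ω => f ω / e ω) μ) :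
    μ[fun ω => f ω / e ω | m] =ᵐ[μ] fun ω => μ[f | m] ω / e ω := by
  simp only [div_eq_inv_mul] at hfe ⊢
  exact condExp_mul_of_stronglyMeasurable_left he.measurable.inv.stronglyMeasurable hfe hf

theorem condCov_div_condExp_ae_eq (A B : Ω → ℝ) (hA : ∀ᵐ ω ∂μ, μ[A | m] ω ≠ 0) :
    (fun ω => condCov μ m A B ω / μ[A | m] ω)
      =ᵐ[μ] fun ω => μ[fun ω => A ω * B ω | m] ω / μ[A | m] ω - μ[B | m] ω := by
  filter_upwards [hA] with ω hω
  rw [condCov, sub_div, mul_div_cancel_left₀ _ hω]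

end

theorem ipw_reduced_propensity_treated_general
    {Ω α β : Type*} [MeasurableSpace Ω] [MeasurableSpace α] [MeasurableSpace β]
    (μ : Measure Ω) [IsProbabilityMeasure μ]
    (X : Ω → α) (d : α → β) (T Y1 : Ω → ℝ)
    (hX : Measurable X) (hd : Measurable d)
    (ed : Ω → ℝ)
    (h_ed : ed = condExp (MeasurableSpace.comap (d ∘ X) inferInstance) μ T)
    (h_pos : ∀ᵐ ω ∂μ, 0 < ed ω ∧ ed ω < 1)
    (hInt1 : Integrable (fun ω => T ω * Y1 ω / ed ω) μ) :
    ∫ ω, T ω * Y1 ω / ed ω ∂μ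
      = ∫ ω, Y1 ω ∂μ
        + ∫ ω, condCov μ (MeasurableSpace.comap (d ∘ X) inferInstance) T Y1 ω / ed ω ∂μ := by
  subst h_ed
  have hm := (hd.comp hX).comap_le
  set m := MeasurableSpace.comap (d ∘ X) inferInstance
  have he_ne : ∀ᵐ ω ∂μ, μ[T | m] ω ≠ 0 := h_pos.mono fun ω h => h.1.ne'
  have he_bound : ∀ᵐ ω ∂μ, ‖μ[T | m] ω‖ ≤ 1 :=
    h_pos.mono fun ω h => by rw [Real.norm_of_nonneg h.1.le]; exact h.2.le
  have hTY : Integrable (fun ω => T ω * Y1 ω) μ :=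
    hInt1.of_div_of_ae_bound integrable_condExp.aestronglyMeasurable he_bound he_ne
  have hpull :=
    condExp_div_of_stronglyMeasurable_right (stronglyMeasurable_condExp (m := m)) hTY hInt1
  have hpull_int : Integrable (fun ω => μ[fun ω => T ω * Y1 ω | m] ω / μ[T | m] ω) μ :=
    integrable_condExp.congr hpull
  calc ∫ ω, T ω * Y1 ω / μ[T | m] ω ∂μ
      = ∫ ω, μ[fun ω => T ω * Y1 ω | m] ω / μ[T | m] ω ∂μ :=
        (integral_condExp hm).symm.trans (integral_congr_ae hpull)
    _ = ∫ ω, Y1 ω ∂μ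
          + ∫ ω, (μ[fun ω => T ω * Y1 ω | m] ω / μ[T | m] ω - μ[Y1 | m] ω) ∂μ := by
        rw [integral_sub hpull_int integrable_condExp, integral_condExp hm]
        ring
    _ = _ := by rw [integral_congr_ae (condCov_div_condExp_ae_eq T Y1 he_ne)]

/-- For a {0,1}-valued treatment `T`, square-integrable outcome `Y(1)`, measurable reduction
`d` and reduced propensity `e_d(X) = E[T | d(X)]` with `0 < e_d(X) < 1` a.s.:
`E[T·Y(1)/e_d(X)] = E[Y(1)] + E[Cov(T, Y(1) | d(X)) / e_d(X)]`. -/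
theorem ipw_reduced_propensity_treated
    {Ω α β : Type*} [MeasurableSpace Ω] [MeasurableSpace α] [MeasurableSpace β]
    (μ : Measure Ω) [IsProbabilityMeasure μ]
    (X : Ω → α) (d : α → β) (T Y1 : Ω → ℝ)
    (hX : Measurable X) (hd : Measurable d)
    (hT01 : ∀ ω, T ω = 0 ∨ T ω = 1)
    (hY1 : MemLp Y1 2 μ) (hT : MemLp T 2 μ)
    (ed : Ω → ℝ)
    (h_ed : ed = condExp (MeasurableSpace.comap (d ∘ X) inferInstance) μ T)
    (h_pos : ∀ᵐ ω ∂μ, 0 < ed ω ∧ ed ω < 1)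
    (hInt1 : Integrable (fun ω => T ω * Y1 ω / ed ω) μ)
    (hInt2 : Integrable
      (fun ω => condCov μ (MeasurableSpace.comap (d ∘ X) inferInstance) T Y1 ω / ed ω) μ) :
    ∫ ω, T ω * Y1 ω / ed ω ∂μ
      = ∫ ω, Y1 ω ∂μ
        + ∫ ω, condCov μ (MeasurableSpace.comap (d ∘ X) inferInstance) T Y1 ω / ed ω ∂μ :=
  ipw_reduced_propensity_treated_general μ X d T Y1 hX hd ed h_ed h_pos hInt1
end

section
/- Let T be {0,1}-valued, Y(0) integrable, and e_d(X) = E[T|d(X)] with 0 < e_d(X) < 1 a.s. Then E[(1-T)·Y(0)/(1-e_d(X))] = E[Y(0)] - E[Cov(T, Y(0) | d(X)) / (1 - e_d(X))]. -/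
/-! The weight `(1 - e_d)⁻¹` is measurable for `σ(d(X))`, so by the tower property `(1 - T) Y(0)`
may be replaced by its conditional expectation
`E[Y(0) | d(X)] - E[T Y(0) | d(X)] = (1 - e_d) E[Y(0) | d(X)] - Cov(T, Y(0) | d(X))`.
Dividing by `1 - e_d` and integrating once more gives the identity. -/

open MeasureTheory ProbabilityTheory

section

variable {Ω : Type*} {m mΩ : MeasurableSpace Ω} {μ : Measure Ω}

theorem integral_mul_condExp_of_stronglyMeasurable (hm : m ≤ mΩ) [SigmaFinite (μ.trim hm)]
    {g f : Ω → ℝ} (hg : StronglyMeasurable[m] g) (hgf : Integrable (g * f) μ)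
    (hf : Integrable f μ) :
    ∫ ω, g ω * μ[f | m] ω ∂μ = ∫ ω, g ω * f ω ∂μ :=
  (integral_congr_ae (condExp_mul_of_stronglyMeasurable_left hg hgf hf).symm).trans
    (integral_condExp hm)

theorem condExp_one_sub_mul_ae_eq {A B : Ω → ℝ} (hB : Integrable B μ)
    (hAB : Integrable (A * B) μ) :
    μ[fun ω => (1 - A ω) * B ω | m]
      =ᵐ[μ] fun ω => (1 - μ[A | m] ω) * μ[B | m] ω - condCov μ m A B ω := by
  have h_split : (fun ω => (1 - A ω) * B ω) = B - A * B := by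
    ext ω; simp only [Pi.sub_apply, Pi.mul_apply]; ring
  filter_upwards [h_split ▸ condExp_sub hB hAB m] with ω hω
  rw [hω, condCov]
  simp only [Pi.sub_apply, Pi.mul_def]
  ring

theorem integral_one_sub_mul_div_one_sub_condExp [IsFiniteMeasure μ] (hm : m ≤ mΩ)
    {T Y e : Ω → ℝ} (he : e = μ[T | m]) (he_ne_one : ∀ᵐ ω ∂μ, e ω ≠ 1)
    (hY : Integrable Y μ) (hTY : Integrable (T * Y) μ)
    (h_ipw : Integrable (fun ω => (1 - T ω) * Y ω / (1 - e ω)) μ)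
    (h_cov : Integrable (fun ω => condCov μ m T Y ω / (1 - e ω)) μ) :
    ∫ ω, (1 - T ω) * Y ω / (1 - e ω) ∂μ
      = ∫ ω, Y ω ∂μ - ∫ ω, condCov μ m T Y ω / (1 - e ω) ∂μ := by
  have h_weight : StronglyMeasurable[m] fun ω => (1 - e ω)⁻¹ :=
    he ▸ (measurable_const.sub stronglyMeasurable_condExp.measurable).inv.stronglyMeasurable
  have h_rewrite : (fun ω => (1 - T ω) * Y ω / (1 - e ω))
      = (fun ω => (1 - e ω)⁻¹) * fun ω => (1 - T ω) * Y ω := by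
    ext ω; simp only [Pi.mul_apply]; ring
  have h_pointwise : (fun ω => (1 - e ω)⁻¹ * μ[fun ω => (1 - T ω) * Y ω | m] ω)
      =ᵐ[μ] fun ω => μ[Y | m] ω - condCov μ m T Y ω / (1 - e ω) := by
    filter_upwards [condExp_one_sub_mul_ae_eq hY hTY, he_ne_one] with ω hω he_ω
    have : 1 - e ω ≠ 0 := sub_ne_zero.mpr he_ω.symm
    rw [hω, ← he]
    field_simp
  calc ∫ ω, (1 - T ω) * Y ω / (1 - e ω) ∂μ
      = ∫ ω, (1 - e ω)⁻¹ * μ[fun ω => (1 - T ω) * Y ω | m] ω ∂μ := by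
        rw [integral_mul_condExp_of_stronglyMeasurable hm h_weight (h_rewrite ▸ h_ipw)]
        · simp_rw [div_eq_inv_mul]
        · convert hY.sub hTY using 1
          ext ω; simp only [Pi.sub_apply, Pi.mul_apply]; ring
    _ = ∫ ω, μ[Y | m] ω ∂μ - ∫ ω, condCov μ m T Y ω / (1 - e ω) ∂μ := by
        rw [integral_congr_ae h_pointwise, integral_sub integrable_condExp h_cov]
    _ = ∫ ω, Y ω ∂μ - ∫ ω, condCov μ m T Y ω / (1 - e ω) ∂μ := by
        rw [integral_condExp hm]

end

theorem ipw_reduced_propensity_control_general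
    {Ω α β : Type*} [MeasurableSpace Ω] [MeasurableSpace α] [MeasurableSpace β]
    (μ : Measure Ω) [IsProbabilityMeasure μ]
    (X : Ω → α) (d : α → β) (T Y0 : Ω → ℝ)
    (hX : Measurable X) (hd : Measurable d)
    (hY0 : MemLp Y0 2 μ) (hT : MemLp T 2 μ)
    (ed : Ω → ℝ)
    (h_ed : ed = condExp (MeasurableSpace.comap (d ∘ X) inferInstance) μ T)
    (h_pos : ∀ᵐ ω ∂μ, 0 < ed ω ∧ ed ω < 1)
    (hInt1 : Integrable (fun ω => (1 - T ω) * Y0 ω / (1 - ed ω)) μ)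
    (hInt2 : Integrable
      (fun ω => condCov μ (MeasurableSpace.comap (d ∘ X) inferInstance) T Y0 ω / (1 - ed ω)) μ) :
    ∫ ω, (1 - T ω) * Y0 ω / (1 - ed ω) ∂μ
      = ∫ ω, Y0 ω ∂μ
        - ∫ ω, condCov μ (MeasurableSpace.comap (d ∘ X) inferInstance) T Y0 ω / (1 - ed ω) ∂μ :=
  integral_one_sub_mul_div_one_sub_condExp (hd.comp hX).comap_le h_ed
    (h_pos.mono fun _ h => h.2.ne) (hY0.integrable one_le_two) (hT.integrable_mul hY0) hInt1 hInt2

/-- For a {0,1}-valued treatment `T`, outcome `Y(0)`, measurable reduction `d` and reduced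
propensity `e_d(X) = E[T | d(X)]` with `0 < e_d(X) < 1` a.s.:
`E[(1-T)·Y(0)/(1-e_d(X))] = E[Y(0)] - E[Cov(T, Y(0) | d(X)) / (1 - e_d(X))]`. -/
theorem ipw_reduced_propensity_control
    {Ω α β : Type*} [MeasurableSpace Ω] [MeasurableSpace α] [MeasurableSpace β]
    (μ : Measure Ω) [IsProbabilityMeasure μ]
    (X : Ω → α) (d : α → β) (T Y0 : Ω → ℝ)
    (hX : Measurable X) (hd : Measurable d)
    (hT01 : ∀ ω, T ω = 0 ∨ T ω = 1)
    (hY0 : MemLp Y0 2 μ) (hT : MemLp T 2 μ)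
    (ed : Ω → ℝ)
    (h_ed : ed = condExp (MeasurableSpace.comap (d ∘ X) inferInstance) μ T)
    (h_pos : ∀ᵐ ω ∂μ, 0 < ed ω ∧ ed ω < 1)
    (hInt1 : Integrable (fun ω => (1 - T ω) * Y0 ω / (1 - ed ω)) μ)
    (hInt2 : Integrable
      (fun ω => condCov μ (MeasurableSpace.comap (d ∘ X) inferInstance) T Y0 ω / (1 - ed ω)) μ) :
    ∫ ω, (1 - T ω) * Y0 ω / (1 - ed ω) ∂μ
      = ∫ ω, Y0 ω ∂μ
        - ∫ ω, condCov μ (MeasurableSpace.comap (d ∘ X) inferInstance) T Y0 ω / (1 - ed ω) ∂μ :=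
  ipw_reduced_propensity_control_general μ X d T Y0 hX hd hY0 hT ed h_ed h_pos hInt1 hInt2
end

section
/- The reduction bias formula: under the setup above, E[Y(1)] - E[Y(0)] - (E[T·Y(1)/e_d(X)] - E[(1-T)·Y(0)/(1-e_d(X))]) = -E[Cov(Y(1),T|d(X))/e_d(X) + Cov(Y(0),T|d(X))/(1-e_d(X))]. -/
open MeasureTheory ProbabilityTheory

namespace ProbabilityTheory

variable {Ω : Type*} {m mΩ : MeasurableSpace Ω} {μ : Measure Ω}

theorem condExp_const_sub_ae_eq (hm : m ≤ mΩ) [IsFiniteMeasure μ] {B : Ω → ℝ} (c : ℝ)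
    (hB : Integrable B μ) : μ[fun ω => c - B ω | m] =ᵐ[μ] fun ω => c - μ[B | m] ω := by
  refine (condExp_sub (integrable_const c) hB m).trans ?_
  rw [condExp_const hm c]
  rfl

theorem condCov_const_sub_ae_eq (hm : m ≤ mΩ) [IsFiniteMeasure μ] {A B : Ω → ℝ} (c : ℝ)
    (hA : Integrable A μ) (hB : Integrable B μ) (hAB : Integrable (fun ω => A ω * B ω) μ) :
    condCov μ m A (fun ω => c - B ω) =ᵐ[μ] -condCov μ m A B := by
  have hAcB :
      μ[fun ω => A ω * (c - B ω) | m] =ᵐ[μ] c • μ[A | m] - μ[fun ω => A ω * B ω | m] := by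
    have hsplit : (fun ω => A ω * (c - B ω)) = c • A - fun ω => A ω * B ω := by
      ext ω; simp only [Pi.sub_apply, Pi.smul_apply, smul_eq_mul]; ring
    rw [hsplit]
    exact (condExp_sub (hA.smul c) hAB m).trans ((condExp_smul c A m).sub .rfl)
  filter_upwards [hAcB, condExp_const_sub_ae_eq hm c hB] with ω h₁ h₂
  simp only [condCov, Pi.neg_apply, h₁, h₂, Pi.sub_apply, Pi.smul_apply, smul_eq_mul]
  ring

theorem condExp_mul_div_ae_eq_condCov_div_add {S Y e : Ω → ℝ}
    (hSY : Integrable (fun ω => S ω * Y ω) μ) (he : e =ᵐ[μ] μ[S | m]) (hne : ∀ᵐ ω ∂μ, e ω ≠ 0)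
    (hw : Integrable (fun ω => S ω * Y ω / e ω) μ) :
    μ[fun ω => S ω * Y ω / e ω | m] =ᵐ[μ] fun ω => condCov μ m Y S ω / e ω + μ[Y | m] ω := by
  have hfac : (fun ω => S ω * Y ω / e ω) = e⁻¹ * fun ω => S ω * Y ω := by
    ext ω; simp only [Pi.mul_apply, Pi.inv_apply]; ring
  have he_inv : AEStronglyMeasurable[m] e⁻¹ μ :=
    ⟨(μ[S | m])⁻¹, stronglyMeasurable_condExp.measurable.inv.stronglyMeasurable, he.inv⟩
  rw [hfac] at hw ⊢
  filter_upwards [condExp_mul_of_aestronglyMeasurable_left he_inv hw hSY, he, hne]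
    with ω hpull he_ω hne_ω
  have hswap : (fun ω => S ω * Y ω) = fun ω => Y ω * S ω := funext fun ω => mul_comm _ _
  rw [hpull, Pi.mul_apply, Pi.inv_apply, hswap]
  simp only [condCov, ← he_ω]
  field_simp
  ring

theorem integral_mul_div_eq_integral_condCov_div_add (hm : m ≤ mΩ) [SigmaFinite (μ.trim hm)]
    {S Y e : Ω → ℝ} (hSY : Integrable (fun ω => S ω * Y ω) μ)
    (he : e =ᵐ[μ] μ[S | m]) (hne : ∀ᵐ ω ∂μ, e ω ≠ 0)
    (hw : Integrable (fun ω => S ω * Y ω / e ω) μ) :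
    Integrable (fun ω => condCov μ m Y S ω / e ω) μ ∧
      ∫ ω, S ω * Y ω / e ω ∂μ = (∫ ω, condCov μ m Y S ω / e ω ∂μ) + ∫ ω, Y ω ∂μ := by
  have hpull := condExp_mul_div_ae_eq_condCov_div_add hSY he hne hw
  have hcov : Integrable (fun ω => condCov μ m Y S ω / e ω) μ := by
    refine ((integrable_condExp (m := m) (f := fun ω => S ω * Y ω / e ω)).sub
      (integrable_condExp (m := m) (f := Y))).congr ?_
    filter_upwards [hpull] with ω h
    simp only [Pi.sub_apply, h, add_sub_cancel_right]
  refine ⟨hcov, ?_⟩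
  calc ∫ ω, S ω * Y ω / e ω ∂μ = ∫ ω, μ[fun ω => S ω * Y ω / e ω | m] ω ∂μ :=
        (integral_condExp hm).symm
    _ = ∫ ω, (condCov μ m Y S ω / e ω + μ[Y | m] ω) ∂μ := integral_congr_ae hpull
    _ = (∫ ω, condCov μ m Y S ω / e ω ∂μ) + ∫ ω, Y ω ∂μ := by
      rw [integral_add hcov integrable_condExp, integral_condExp hm]

end ProbabilityTheory

theorem reduction_bias_formula_general
    {Ω α β : Type*} [MeasurableSpace Ω] [MeasurableSpace α] [MeasurableSpace β]
    (μ : Measure Ω) [IsProbabilityMeasure μ]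
    (X : Ω → α) (d : α → β) (T Y0 Y1 : Ω → ℝ)
    (hX : Measurable X) (hd : Measurable d)
    (hT01 : ∀ ω, T ω = 0 ∨ T ω = 1)
    (hY0 : MemLp Y0 2 μ) (hY1 : MemLp Y1 2 μ) (hT : MemLp T 2 μ)
    (ed : Ω → ℝ)
    (h_ed : ed = condExp (MeasurableSpace.comap (d ∘ X) inferInstance) μ T)
    (h_pos : ∀ᵐ ω ∂μ, 0 < ed ω ∧ ed ω < 1)
    (hInt1 : Integrable (fun ω => T ω * Y1 ω / ed ω) μ)
    (hInt2 : Integrable (fun ω => (1 - T ω) * Y0 ω / (1 - ed ω)) μ) :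
    (∫ ω, Y1 ω ∂μ) - (∫ ω, Y0 ω ∂μ)
      - ((∫ ω, T ω * Y1 ω / ed ω ∂μ) - ∫ ω, (1 - T ω) * Y0 ω / (1 - ed ω) ∂μ)
      = -∫ ω, (condCov μ (MeasurableSpace.comap (d ∘ X) inferInstance) Y1 T ω / ed ω
          + condCov μ (MeasurableSpace.comap (d ∘ X) inferInstance) Y0 T ω / (1 - ed ω)) ∂μ := by
  have hm := (hd.comp hX).comap_le
  have hT_bound : ∀ᵐ ω ∂μ, ‖T ω‖ ≤ 1 :=
    .of_forall fun ω => by rcases hT01 ω with h | h <;> simp [h]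
  have hTi := hT.integrable one_le_two
  have hY0i := hY0.integrable one_le_two
  have hTY1 := (hY1.integrable one_le_two).bdd_mul hT.aestronglyMeasurable hT_bound
  have h1TY0 : Integrable (fun ω => (1 - T ω) * Y0 ω) μ :=
    (hY0i.sub (hY0i.bdd_mul hT.aestronglyMeasurable hT_bound)).congr
      (.of_forall fun ω => by simp only [Pi.sub_apply]; ring)
  have h1ed := h_ed ▸ (condExp_const_sub_ae_eq hm 1 hTi).symm
  obtain ⟨hcov1, htreated⟩ := integral_mul_div_eq_integral_condCov_div_add hm hTY1
    (h_ed ▸ .rfl) (h_pos.mono fun ω h => h.1.ne') hInt1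
  obtain ⟨hcov0, hcontrol⟩ := integral_mul_div_eq_integral_condCov_div_add hm h1TY0
    h1ed (h_pos.mono fun ω h => sub_ne_zero.mpr h.2.ne') hInt2
  have hflip :
      (fun ω => condCov μ (MeasurableSpace.comap (d ∘ X) inferInstance) Y0 T ω / (1 - ed ω))
      =ᵐ[μ] fun ω => -(condCov μ (MeasurableSpace.comap (d ∘ X) inferInstance) Y0
        (fun ω => 1 - T ω) ω / (1 - ed ω)) := by
    filter_upwards [condCov_const_sub_ae_eq hm 1 hY0i hTi
      (hY0i.mul_bdd hT.aestronglyMeasurable hT_bound)] with ω h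
    rw [h, Pi.neg_apply, neg_div, neg_neg]
  rw [integral_add hcov1 (hcov0.neg.congr hflip.symm), integral_congr_ae hflip, integral_neg,
    htreated, hcontrol]
  ring

/-- Reduction bias formula:
`E[Y(1)] - E[Y(0)] - (E[T·Y(1)/e_d(X)] - E[(1-T)·Y(0)/(1-e_d(X))])`
` = -E[Cov(Y(1),T|d(X))/e_d(X) + Cov(Y(0),T|d(X))/(1-e_d(X))]`. -/
theorem reduction_bias_formula
    {Ω α β : Type*} [MeasurableSpace Ω] [MeasurableSpace α] [MeasurableSpace β]
    (μ : Measure Ω) [IsProbabilityMeasure μ]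
    (X : Ω → α) (d : α → β) (T Y0 Y1 : Ω → ℝ)
    (hX : Measurable X) (hd : Measurable d)
    (hT01 : ∀ ω, T ω = 0 ∨ T ω = 1)
    (hY0 : MemLp Y0 2 μ) (hY1 : MemLp Y1 2 μ) (hT : MemLp T 2 μ)
    (ed : Ω → ℝ)
    (h_ed : ed = condExp (MeasurableSpace.comap (d ∘ X) inferInstance) μ T)
    (h_pos : ∀ᵐ ω ∂μ, 0 < ed ω ∧ ed ω < 1)
    (hInt1 : Integrable (fun ω => T ω * Y1 ω / ed ω) μ)
    (hInt2 : Integrable (fun ω => (1 - T ω) * Y0 ω / (1 - ed ω)) μ)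
    (hInt3 : Integrable
      (fun ω => condCov μ (MeasurableSpace.comap (d ∘ X) inferInstance) Y1 T ω / ed ω) μ)
    (hInt4 : Integrable
      (fun ω => condCov μ (MeasurableSpace.comap (d ∘ X) inferInstance) Y0 T ω / (1 - ed ω)) μ) :
    (∫ ω, Y1 ω ∂μ) - (∫ ω, Y0 ω ∂μ)
      - ((∫ ω, T ω * Y1 ω / ed ω ∂μ) - ∫ ω, (1 - T ω) * Y0 ω / (1 - ed ω) ∂μ)
      = -∫ ω, (condCov μ (MeasurableSpace.comap (d ∘ X) inferInstance) Y1 T ω / ed ω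
          + condCov μ (MeasurableSpace.comap (d ∘ X) inferInstance) Y0 T ω / (1 - ed ω)) ∂μ :=
  reduction_bias_formula_general μ X d T Y0 Y1 hX hd hT01 hY0 hY1 hT ed h_ed h_pos hInt1 hInt2
end

section
/- Let α, β be non-collinear unit vectors in ℝ^p with α'β ≠ 0. A unit vector γ satisfies (α'γ)(γ'β) = α'β if and only if, writing γ = w₁u₁ + w₂u₂ + r with u₁ = (α+β)/√(2+2α'β), u₂ = (α-β)/√(2-2α'β), and r orthogonal to span{α,β}, the coordinates satisfy ((α'β+1)/(2α'β))w₁² + ((α'β-1)/(2α'β))w₂² = 1. -/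
open Matrix

/-- For non-collinear unit vectors `α, β` with `α'β ≠ 0`, a unit vector
`γ = w₁u₁ + w₂u₂ + r` (with `r ⊥ span{α,β}`) satisfies the deconfounding constraint
`(α'γ)(γ'β) = α'β` iff `((α'β+1)/(2α'β))w₁² + ((α'β-1)/(2α'β))w₂² = 1`. -/
theorem deconfounding_hyperbola
    {p : ℕ} (α β γ : Fin p → ℝ)
    (hα : α ⬝ᵥ α = 1) (hβ : β ⬝ᵥ β = 1) (hγ : γ ⬝ᵥ γ = 1)
    (hρ : α ⬝ᵥ β ∈ Set.Ioo (-1 : ℝ) 1) (hρ0 : α ⬝ᵥ β ≠ 0)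
    (u₁ u₂ : Fin p → ℝ)
    (hu₁ : u₁ = (Real.sqrt (2 + 2 * (α ⬝ᵥ β)))⁻¹ • (α + β))
    (hu₂ : u₂ = (Real.sqrt (2 - 2 * (α ⬝ᵥ β)))⁻¹ • (α - β))
    (w₁ w₂ : ℝ) (r : Fin p → ℝ)
    (hdec : γ = w₁ • u₁ + w₂ • u₂ + r)
    (hrα : r ⬝ᵥ α = 0) (hrβ : r ⬝ᵥ β = 0) :
    (α ⬝ᵥ γ) * (γ ⬝ᵥ β) = α ⬝ᵥ β
      ↔ ((α ⬝ᵥ β + 1) / (2 * (α ⬝ᵥ β))) * w₁ ^ 2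
          + ((α ⬝ᵥ β - 1) / (2 * (α ⬝ᵥ β))) * w₂ ^ 2 = 1 := by
  set ρ := α ⬝ᵥ β with hρdef
  obtain ⟨h1, h2⟩ := hρ
  have hs1pos : (0:ℝ) < 2 + 2 * ρ := by linarith
  have hs2pos : (0:ℝ) < 2 - 2 * ρ := by linarith
  have hs1 : Real.sqrt (2 + 2 * ρ) ^ 2 = 2 + 2 * ρ := Real.sq_sqrt hs1pos.le
  have hs2 : Real.sqrt (2 - 2 * ρ) ^ 2 = 2 - 2 * ρ := Real.sq_sqrt hs2pos.le
  have hs1ne : Real.sqrt (2 + 2 * ρ) ≠ 0 := by positivity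
  have hs2ne : Real.sqrt (2 - 2 * ρ) ≠ 0 := by positivity
  have hαr : α ⬝ᵥ r = 0 := by rw [dotProduct_comm]; exact hrα
  have hβα : β ⬝ᵥ α = ρ := by rw [dotProduct_comm]
  have hAG : α ⬝ᵥ γ = w₁ * (1 + ρ) / Real.sqrt (2 + 2 * ρ)
      + w₂ * (1 - ρ) / Real.sqrt (2 - 2 * ρ) := by
    rw [hdec, hu₁, hu₂]
    simp [dotProduct_add, dotProduct_smul, dotProduct_sub, hα, hβα, hαr, ← hρdef]
    ring
  have hGB : γ ⬝ᵥ β = w₁ * (1 + ρ) / Real.sqrt (2 + 2 * ρ)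
      - w₂ * (1 - ρ) / Real.sqrt (2 - 2 * ρ) := by
    rw [hdec, hu₁, hu₂]
    simp [add_dotProduct, smul_dotProduct, sub_dotProduct, hβ, ← hρdef, hrβ]
    ring
  rw [hAG, hGB]
  have ha : (w₁ * (1 + ρ) / Real.sqrt (2 + 2 * ρ)) ^ 2 = w₁ ^ 2 * (1 + ρ) / 2 := by
    rw [div_pow, mul_pow, hs1]
    field_simp
  have hb : (w₂ * (1 - ρ) / Real.sqrt (2 - 2 * ρ)) ^ 2 = w₂ ^ 2 * (1 - ρ) / 2 := by
    rw [div_pow, mul_pow, hs2]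
    field_simp
  have key : (w₁ * (1 + ρ) / Real.sqrt (2 + 2 * ρ)
      + w₂ * (1 - ρ) / Real.sqrt (2 - 2 * ρ))
      * (w₁ * (1 + ρ) / Real.sqrt (2 + 2 * ρ)
      - w₂ * (1 - ρ) / Real.sqrt (2 - 2 * ρ))
      = w₁ ^ 2 * (1 + ρ) / 2 - w₂ ^ 2 * (1 - ρ) / 2 := by
    have expand : ∀ a b : ℝ, (a + b) * (a - b) = a ^ 2 - b ^ 2 := fun a b => by ring
    rw [expand, ha, hb]
  rw [key]
  have hrw : ((ρ + 1) / (2 * ρ)) * w₁ ^ 2 + ((ρ - 1) / (2 * ρ)) * w₂ ^ 2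
      = (w₁ ^ 2 * (1 + ρ) / 2 - w₂ ^ 2 * (1 - ρ) / 2) / ρ := by
    field_simp
    ring
  rw [hrw, div_eq_one_iff_eq hρ0]
end

section
/- IPW identification of the ATT: under unconfoundedness and positivity, E[Y(1)-Y(0) | T=1] = (1/P(T=1))·E[(T - (1-T)·e(X)/(1-e(X)))·Y], where e(X) = P(T=1|X). -/
/-!
Write `e = E[T | X]` and `w = e / (1 - e)`. On `{T = 1}` the IPW integrand is `Y(1)`, on `{T = 0}`
it is `-w · Y(0)`, so the right-hand side is `E[T Y(1)] - E[w (1 - T) Y(0)]`, while the left-hand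
side is `E[T (Y(1) - Y(0))] / P(T = 1)`. It remains to show `E[T Y(0)] = E[w (1 - T) Y(0)]`.
Conditional independence of `Y(0)` and `T` given `X` gives `E[T Y(0) | X] = e · E[Y(0) | X]` and
`E[(1 - T) Y(0) | X] = (1 - e) · E[Y(0) | X]`; since `w` is `X`-measurable and `w (1 - e) = e`,
both sides have the same conditional expectation `e · E[Y(0) | X]`.
-/

open MeasureTheory ProbabilityTheory MeasurableSpace Set

namespace ProbabilityTheory

/-- The a.e. quantifier can be pulled out because the Borel σ-algebra of `ℝ` is generated by the
countable π-system of rational half-lines `Iic q`. -/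
theorem Kernel.IndepFun.ae_indepFun_real {α Ω : Type*} {mα : MeasurableSpace α}
    {mΩ : MeasurableSpace Ω} {κ : Kernel α Ω} [IsMarkovKernel κ] {μ : Measure α}
    {f g : Ω → ℝ} (hf : Measurable f) (hg : Measurable g) (h : Kernel.IndepFun f g κ μ) :
    ∀ᵐ a ∂μ, ProbabilityTheory.IndepFun f g (κ a) := by
  have hIic : ∀ᵐ a ∂μ, ∀ q r : ℚ, κ a (f ⁻¹' Iic (q : ℝ) ∩ g ⁻¹' Iic (r : ℝ))
      = κ a (f ⁻¹' Iic (q : ℝ)) * κ a (g ⁻¹' Iic (r : ℝ)) := by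
    simp only [ae_all_iff]
    exact fun q r ↦ h.measure_inter_preimage_eq_mul _ _ measurableSet_Iic measurableSet_Iic
  have hcomap (φ : Ω → ℝ) : MeasurableSpace.comap φ inferInstance
      = generateFrom (preimage φ '' ⋃ q : ℚ, {Iic (q : ℝ)}) := by
    rw [← comap_generateFrom, ← Real.borel_eq_generateFrom_Iic_rat,
      ← BorelSpace.measurable_eq (α := ℝ)]
  filter_upwards [hIic] with a ha
  refine ProbabilityTheory.IndepSets.indep hf.comap_le hg.comap_le
    (Real.isPiSystem_Iic_rat.comap f) (Real.isPiSystem_Iic_rat.comap g) (hcomap f) (hcomap g)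
    ((ProbabilityTheory.IndepSets_iff _ _ _).mpr ?_)
  rintro _ _ ⟨_, ⟨_, ⟨q, rfl⟩, rfl⟩, rfl⟩ ⟨_, ⟨_, ⟨r, rfl⟩, rfl⟩, rfl⟩
  exact ha q r

section CondIndepFun

variable {Ω : Type*} {m mΩ : MeasurableSpace Ω} [StandardBorelSpace Ω] {hm : m ≤ mΩ}
  {μ : Measure Ω} [IsFiniteMeasure μ]

theorem CondIndepFun.congr {β γ : Type*} [MeasurableSpace β] [MeasurableSpace γ]
    {f f' : Ω → β} {g g' : Ω → γ} (h : CondIndepFun m hm f g μ) (hf : f =ᵐ[μ] f')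
    (hg : g =ᵐ[μ] g') : CondIndepFun m hm f' g' μ := by
  rw [← condExpKernel_comp_trim (μ := μ) hm] at hf hg
  exact Kernel.IndepFun.congr' h (Measure.ae_ae_of_ae_comp hf) (Measure.ae_ae_of_ae_comp hg)

theorem CondIndepFun.condExp_mul_of_measurable {f g : Ω → ℝ}
    (h : CondIndepFun m hm f g μ) (hf_meas : Measurable f) (hg_meas : Measurable g)
    (hf : Integrable f μ) (hg : Integrable g μ) (hfg : Integrable (f * g) μ) :
    μ[f * g | m] =ᵐ[μ] μ[f | m] * μ[g | m] := by
  refine ae_of_ae_trim hm ?_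
  filter_upwards [condExp_ae_eq_trim_integral_condExpKernel hm hfg,
    condExp_ae_eq_trim_integral_condExpKernel hm hf,
    condExp_ae_eq_trim_integral_condExpKernel hm hg,
    Kernel.IndepFun.ae_indepFun_real hf_meas hg_meas h] with ω hfgω hfω hgω hindep
  rw [Pi.mul_apply, hfgω, hfω, hgω]
  exact hindep.integral_mul_eq_mul_integral hf_meas.aestronglyMeasurable
    hg_meas.aestronglyMeasurable

theorem CondIndepFun.condExp_mul {f g : Ω → ℝ}
    (h : CondIndepFun m hm f g μ) (hf : Integrable f μ) (hg : Integrable g μ)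
    (hfg : Integrable (f * g) μ) :
    μ[f * g | m] =ᵐ[μ] μ[f | m] * μ[g | m] := by
  have hfg_mk : f * g =ᵐ[μ] hf.1.mk f * hg.1.mk g := hf.1.ae_eq_mk.mul hg.1.ae_eq_mk
  calc μ[f * g | m] =ᵐ[μ] μ[hf.1.mk f * hg.1.mk g | m] := condExp_congr_ae hfg_mk
    _ =ᵐ[μ] μ[hf.1.mk f | m] * μ[hg.1.mk g | m] :=
      (h.congr hf.1.ae_eq_mk hg.1.ae_eq_mk).condExp_mul_of_measurable
        hf.1.stronglyMeasurable_mk.measurable hg.1.stronglyMeasurable_mk.measurable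
        (hf.congr hf.1.ae_eq_mk) (hg.congr hg.1.ae_eq_mk) (hfg.congr hfg_mk)
    _ =ᵐ[μ] μ[f | m] * μ[g | m] :=
      (condExp_congr_ae hf.1.ae_eq_mk.symm).mul (condExp_congr_ae hg.1.ae_eq_mk.symm)

theorem CondIndepFun.integral_mul_eq_integral_odds_mul_one_sub_mul {T Y : Ω → ℝ}
    (hindep : CondIndepFun m hm Y T μ) (hT : Integrable T μ) (hY : Integrable Y μ)
    (hTY : Integrable (fun ω ↦ T ω * Y ω) μ) (hne : ∀ᵐ ω ∂μ, μ[T | m] ω ≠ 1)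
    (hodds : Integrable (fun ω ↦ μ[T | m] ω / (1 - μ[T | m] ω) * ((1 - T ω) * Y ω)) μ) :
    ∫ ω, T ω * Y ω ∂μ = ∫ ω, μ[T | m] ω / (1 - μ[T | m] ω) * ((1 - T ω) * Y ω) ∂μ := by
  replace hTY : Integrable (T * Y) μ := hTY
  set e := μ[T | m]
  set w : Ω → ℝ := fun ω ↦ e ω / (1 - e ω)
  have hw : StronglyMeasurable[m] w :=
    (stronglyMeasurable_condExp.measurable.div
      (measurable_const.sub stronglyMeasurable_condExp.measurable)).stronglyMeasurable
  have htreated : μ[T * Y | m] =ᵐ[μ] e * μ[Y | m] := by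
    rw [mul_comm T, mul_comm e]
    exact hindep.condExp_mul hY hT (by rwa [mul_comm])
  have hsplit : (1 - T) * Y = Y - T * Y := by ring
  have hcontrol : μ[(1 - T) * Y | m] =ᵐ[μ] (1 - e) * μ[Y | m] := by
    filter_upwards [hsplit ▸ condExp_sub hY hTY m, htreated] with ω h1 h2
    simp only [h1, h2, Pi.sub_apply, Pi.mul_apply, Pi.one_apply]
    ring
  calc ∫ ω, T ω * Y ω ∂μ = ∫ ω, (e * μ[Y | m]) ω ∂μ :=
        (integral_condExp hm).symm.trans (integral_congr_ae htreated)
    _ = ∫ ω, (w * ((1 - e) * μ[Y | m])) ω ∂μ := by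
        refine integral_congr_ae ?_
        filter_upwards [hne] with ω hω
        simp only [w, Pi.mul_apply, Pi.sub_apply, Pi.one_apply]
        field_simp [sub_ne_zero.mpr hω.symm]
    _ = ∫ ω, (w * μ[(1 - T) * Y | m] : Ω → ℝ) ω ∂μ :=
        integral_congr_ae (hcontrol.mul_left (f₃ := w)).symm
    _ = ∫ ω, w ω * ((1 - T ω) * Y ω) ∂μ :=
        (integral_congr_ae (condExp_mul_of_stronglyMeasurable_left (g := (1 - T) * Y) hw
          hodds (by rw [hsplit]; exact hY.sub hTY)).symm).trans (integral_condExp hm)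

end CondIndepFun

theorem integral_cond {Ω E : Type*} [MeasurableSpace Ω] [NormedAddCommGroup E]
    [NormedSpace ℝ E] (μ : Measure Ω) (s : Set Ω) (f : Ω → E) :
    ∫ ω, f ω ∂μ[|s] = (μ s).toReal⁻¹ • ∫ ω in s, f ω ∂μ := by
  rw [cond, integral_smul_measure, ENNReal.toReal_inv]

end ProbabilityTheory

theorem setIntegral_preimage_one_eq_integral_mul {Ω : Type*} [MeasurableSpace Ω] {μ : Measure Ω}
    {T f : Ω → ℝ} (hT : Measurable T) (hT01 : ∀ ω, T ω = 0 ∨ T ω = 1) :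
    ∫ ω in T ⁻¹' {1}, f ω ∂μ = ∫ ω, T ω * f ω ∂μ := by
  rw [← integral_indicator (hT (measurableSet_singleton 1))]
  congr 1 with ω
  rcases hT01 ω with h | h <;> simp [Set.indicator, h]

theorem att_ipw_identification_general
    {Ω α : Type*} [MeasurableSpace Ω] [StandardBorelSpace Ω] [MeasurableSpace α]
    (μ : Measure Ω) [IsProbabilityMeasure μ]
    (X : Ω → α) (T Y0 Y1 Y e : Ω → ℝ)
    (hT : Measurable T) (hY0 : Integrable Y0 μ) (hY1 : Integrable Y1 μ)
    (hT01 : ∀ ω, T ω = 0 ∨ T ω = 1)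
    (hY : Y = fun ω => T ω * Y1 ω + (1 - T ω) * Y0 ω)
    (he : e = condExp (MeasurableSpace.comap X inferInstance) μ T)
    (hle : MeasurableSpace.comap X inferInstance ≤ (inferInstance : MeasurableSpace Ω))
    (h_unconf : CondIndepFun (MeasurableSpace.comap X inferInstance) hle
      (fun ω => (Y0 ω, Y1 ω)) T μ)
    (h_pos : ∀ᵐ ω ∂μ, 0 < e ω ∧ e ω < 1)
    (hInt : Integrable (fun ω => (T ω - (1 - T ω) * e ω / (1 - e ω)) * Y ω) μ) :
    ∫ ω, (Y1 ω - Y0 ω) ∂(ProbabilityTheory.cond μ (T ⁻¹' {1}))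
      = (μ (T ⁻¹' {1})).toReal⁻¹
        * ∫ ω, (T ω - (1 - T ω) * e ω / (1 - e ω)) * Y ω ∂μ := by
  have hT_bdd : ∀ ω, ‖T ω‖ ≤ 1 := fun ω ↦ by rcases hT01 ω with h | h <;> simp [h]
  have hT_int : Integrable T μ := .of_bound hT.aestronglyMeasurable 1 (.of_forall hT_bdd)
  have hTY0 : Integrable (fun ω ↦ T ω * Y0 ω) μ :=
    hY0.bdd_mul hT.aestronglyMeasurable (.of_forall hT_bdd)
  have hTY1 : Integrable (fun ω ↦ T ω * Y1 ω) μ :=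
    hY1.bdd_mul hT.aestronglyMeasurable (.of_forall hT_bdd)
  have hipw (ω : Ω) : (T ω - (1 - T ω) * e ω / (1 - e ω)) * Y ω
      = T ω * Y1 ω - e ω / (1 - e ω) * ((1 - T ω) * Y0 ω) := by
    rcases hT01 ω with h | h <;> simp [hY, h]
  have hodds : Integrable (fun ω ↦ e ω / (1 - e ω) * ((1 - T ω) * Y0 ω)) μ := by
    refine (hTY1.sub hInt).congr (.of_forall fun ω ↦ ?_)
    simp only [Pi.sub_apply, hipw]
    ring
  subst he
  have hY0T : CondIndepFun _ hle Y0 T μ := h_unconf.comp measurable_fst measurable_id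
  have hweight := hY0T.integral_mul_eq_integral_odds_mul_one_sub_mul hT_int hY0 hTY0
    (h_pos.mono fun _ h ↦ h.2.ne) hodds
  rw [integral_cond, setIntegral_preimage_one_eq_integral_mul hT hT01, smul_eq_mul]
  simp_rw [hipw, mul_sub]
  rw [integral_sub hTY1 hTY0, integral_sub hTY1 hodds, hweight]

/-- IPW identification of the ATT: under unconfoundedness and positivity,
`E[Y(1)-Y(0) | T=1] = (1/P(T=1)) · E[(T - (1-T)·e(X)/(1-e(X)))·Y]` with `e(X) = E[T|X]`. -/
theorem att_ipw_identification
    {Ω α : Type*} [MeasurableSpace Ω] [StandardBorelSpace Ω] [MeasurableSpace α]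
    (μ : Measure Ω) [IsProbabilityMeasure μ]
    (X : Ω → α) (T Y0 Y1 Y e : Ω → ℝ)
    (hX : Measurable X) (hT : Measurable T) (hY0 : Integrable Y0 μ) (hY1 : Integrable Y1 μ)
    (hT01 : ∀ ω, T ω = 0 ∨ T ω = 1)
    (hTpos : 0 < μ (T ⁻¹' {1}))
    (hY : Y = fun ω => T ω * Y1 ω + (1 - T ω) * Y0 ω)
    (he : e = condExp (MeasurableSpace.comap X inferInstance) μ T)
    (hle : MeasurableSpace.comap X inferInstance ≤ (inferInstance : MeasurableSpace Ω))
    (h_unconf : CondIndepFun (MeasurableSpace.comap X inferInstance) hle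
      (fun ω => (Y0 ω, Y1 ω)) T μ)
    (h_pos : ∀ᵐ ω ∂μ, 0 < e ω ∧ e ω < 1)
    (hIntW : Integrable (fun ω => e ω / (1 - e ω) * |Y0 ω|) μ)
    (hInt : Integrable (fun ω => (T ω - (1 - T ω) * e ω / (1 - e ω)) * Y ω) μ) :
    ∫ ω, (Y1 ω - Y0 ω) ∂(ProbabilityTheory.cond μ (T ⁻¹' {1}))
      = (μ (T ⁻¹' {1})).toReal⁻¹
        * ∫ ω, (T ω - (1 - T ω) * e ω / (1 - e ω)) * Y ω ∂μ :=
  att_ipw_identification_general μ X T Y0 Y1 Y e hT hY0 hY1 hT01 hY he hle h_unconf h_pos hInt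
end
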